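/- Let b ∈ ℝ^m, λ > 0, and let R_{λ,b} = {x ∈ ℝ^m : g_{λ,b}(x) ≠ 1_{x < b}(x)} ⊆ ∪_{i=1}^m {x : b_i − 1/λ < x_i < b_i}. For A ∈ ℝ^{m×T} with a_{i,T} ≠ 0 for all i, x ∈ ℝ^m, and ε ~ N(0,1), the probability that x + A_{·,T} ε ∈ R_{λ,b} is at most m / (min_i |a_{i,T}| · λ). -/
import Mathlib


open MeasureTheory ProbabilityTheory

/-- The coordinatewise smoothed indicator `g_i`. -/
noncomputable def smoothInd (lam b x : ℝ) : ℝ :=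
  if x < b - 1 / lam then 1 else if x < b then -lam * (x - b) else 0

/-- The smoothed indicator `g_{λ,b}` on `ℝ^m`. -/
noncomputable def smoothIndProd {m : ℕ} (lam : ℝ) (b x : Fin m → ℝ) : ℝ :=
  ∏ i, smoothInd lam (b i) (x i)

/-- The region of smoothing `R_{λ,b}`. -/
def smoothRegion {m : ℕ} (lam : ℝ) (b : Fin m → ℝ) : Set (Fin m → ℝ) :=
  {x | smoothIndProd lam b x ≠ (if ∀ i, x i < b i then (1 : ℝ) else 0)}

lemma gaussianPDF_le_one (x : ℝ) : gaussianPDF 0 1 x ≤ 1 := by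
  rw [gaussianPDF, ← ENNReal.ofReal_one]
  apply ENNReal.ofReal_le_ofReal
  rw [gaussianPDFReal]
  have h1 : Real.sqrt (2 * Real.pi * (1:NNReal)) ≥ 1 := by
    rw [show ((1:NNReal):ℝ) = 1 by norm_num, mul_one]
    rw [show (1:ℝ) = Real.sqrt 1 by simp]
    apply Real.sqrt_le_sqrt
    nlinarith [Real.pi_gt_three]
  have h2 : Real.exp (-(x - 0)^2 / (2 * (1:NNReal))) ≤ 1 := by
    rw [Real.exp_le_one_iff]
    apply div_nonpos_of_nonpos_of_nonneg
    · simp [neg_nonpos]; positivity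
    · positivity
  calc (Real.sqrt (2 * Real.pi * (1:NNReal)))⁻¹ * Real.exp (-(x - 0)^2 / (2 * (1:NNReal)))
      ≤ 1 * 1 := by
        apply mul_le_mul _ h2 (Real.exp_nonneg _) zero_le_one
        rw [inv_le_one_iff₀]; right; exact h1
    _ = 1 := by ring

lemma gauss_le_volume (s : Set ℝ) : gaussianReal 0 1 s ≤ volume s := by
  rw [gaussianReal_apply 0 one_ne_zero s]
  calc ∫⁻ x in s, gaussianPDF 0 1 x ≤ ∫⁻ _ in s, 1 :=
        lintegral_mono fun x => gaussianPDF_le_one x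
    _ = volume s := by simp

lemma slab_volume {a : ℝ} (ha : a ≠ 0) (x c d : ℝ) :
    volume {w : ℝ | x + a * w ∈ Set.Ioo c d} = ENNReal.ofReal (|a|⁻¹ * (d - c)) := by
  have hset : {w : ℝ | x + a * w ∈ Set.Ioo c d} = (a * ·) ⁻¹' (Set.Ioo (c - x) (d - x)) := by
    ext w
    simp only [Set.mem_setOf_eq, Set.mem_Ioo, Set.mem_preimage]
    constructor <;> rintro ⟨h1, h2⟩ <;> constructor <;> linarith
  rw [hset, Real.volume_preimage_mul_left ha, Real.volume_Ioo]
  rw [← ENNReal.ofReal_mul (abs_nonneg _), abs_inv]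
  congr 1
  ring_nf

/-- If all entries of the last column of `A` are nonzero, the probability that
`x + A_{·,T} ε` lands in the smoothing region `R_{λ,b}` is at most
`m / (min_i |a_{i,T}| · λ)`. -/
theorem prob_transition_into_smoothRegion (m T : ℕ) (lam : ℝ) (hlam : 0 < lam)
    (b : Fin (m + 1) → ℝ) (A : Matrix (Fin (m + 1)) (Fin (T + 1)) ℝ)
    (hA : ∀ i, A i (Fin.last T) ≠ 0) (x : Fin (m + 1) → ℝ) :
    gaussianReal 0 1
        {w : ℝ | (fun i => x i + A i (Fin.last T) * w) ∈ smoothRegion lam b} ≤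
      ENNReal.ofReal ((m + 1) /
        ((Finset.univ.inf' Finset.univ_nonempty (fun i => |A i (Fin.last T)|)) * lam)) := by
  set a : Fin (m + 1) → ℝ := fun i => A i (Fin.last T) with ha_def
  set μ := Finset.univ.inf' Finset.univ_nonempty (fun i => |a i|) with hμ_def
  have hμpos : 0 < μ := by
    rw [hμ_def, Finset.lt_inf'_iff]
    intro i _
    exact abs_pos.mpr (hA i)
  -- subset of union of slabs
  have hsub : {w : ℝ | (fun i => x i + a i * w) ∈ smoothRegion lam b} ⊆
      ⋃ i, {w : ℝ | x i + a i * w ∈ Set.Ioo (b i - 1 / lam) (b i)} := by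
    intro w hw
    by_contra hcon
    simp only [Set.mem_iUnion, not_exists, Set.mem_setOf_eq, Set.mem_Ioo, not_and_or, not_lt]
      at hcon
    apply hw
    show smoothIndProd lam b (fun i => x i + a i * w) = _
    have hfac : ∀ i, smoothInd lam (b i) (x i + a i * w)
        = if x i + a i * w < b i then (1:ℝ) else 0 := by
      intro i
      rcases hcon i with h | h
      · have hlt : x i + a i * w < b i := by
          have : (0:ℝ) < 1 / lam := by positivity
          linarith
        rw [if_pos hlt, smoothInd]
        rcases lt_or_eq_of_le h with h' | h'
        · rw [if_pos h']
        · rw [if_neg (by linarith), if_pos hlt]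
          rw [h']; field_simp; ring
      · have hge : ¬ x i + a i * w < b i := not_lt.mpr h
        rw [if_neg hge, smoothInd]
        have h0 : (0:ℝ) < 1 / lam := by positivity
        rw [if_neg (show ¬ x i + a i * w < b i - 1/lam by intro h'; linarith), if_neg hge]
    rw [smoothIndProd]
    simp_rw [hfac]
    by_cases hall : ∀ i, x i + a i * w < b i
    · rw [if_pos hall]
      apply Finset.prod_eq_one
      intro i _
      rw [if_pos (hall i)]
    · rw [if_neg hall]
      push_neg at hall
      obtain ⟨i, hi⟩ := hall
      exact Finset.prod_eq_zero (Finset.mem_univ i) (by rw [if_neg (not_lt.mpr hi)])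
  calc gaussianReal 0 1 {w : ℝ | (fun i => x i + a i * w) ∈ smoothRegion lam b}
      ≤ gaussianReal 0 1 (⋃ i, {w : ℝ | x i + a i * w ∈ Set.Ioo (b i - 1/lam) (b i)}) :=
        measure_mono hsub
    _ ≤ ∑ i, gaussianReal 0 1 {w : ℝ | x i + a i * w ∈ Set.Ioo (b i - 1/lam) (b i)} :=
        measure_iUnion_fintype_le _ _
    _ ≤ ∑ i, ENNReal.ofReal (1 / (μ * lam)) := by
        apply Finset.sum_le_sum
        intro i _
        calc gaussianReal 0 1 {w : ℝ | x i + a i * w ∈ Set.Ioo (b i - 1/lam) (b i)}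
            ≤ volume {w : ℝ | x i + a i * w ∈ Set.Ioo (b i - 1/lam) (b i)} :=
              gauss_le_volume _
          _ = ENNReal.ofReal (|a i|⁻¹ * (b i - (b i - 1/lam))) := slab_volume (hA i) _ _ _
          _ ≤ ENNReal.ofReal (1 / (μ * lam)) := by
              apply ENNReal.ofReal_le_ofReal
              have habs : 0 < |a i| := abs_pos.mpr (hA i)
              have hμle : μ ≤ |a i| := Finset.inf'_le _ (Finset.mem_univ i)
              rw [show b i - (b i - 1/lam) = 1/lam by ring,
                show |a i|⁻¹ * (1/lam) = 1/(|a i| * lam) by field_simp]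
              apply one_div_le_one_div_of_le (by positivity)
              exact mul_le_mul_of_nonneg_right hμle hlam.le
    _ = ENNReal.ofReal ((m + 1) / (μ * lam)) := by
        rw [Finset.sum_const, Finset.card_univ, Fintype.card_fin, nsmul_eq_mul]
        rw [← ENNReal.ofReal_natCast, ← ENNReal.ofReal_mul (by positivity)]
        congr 1
        push_cast
        ring
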